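/- For a prime p and an integer k ≥ 1, define the radical inverse of k in base p by φ_p(k) := Σ_{i≥0} a_i p^{−(i+1)}, where k = Σ_{i≥0} a_i p^i is the base-p expansion of k with digits a_i ∈ {0,…,p−1}. For d ≥ 1, let p_1 < p_2 < … < p_d be the first d primes és define the d-dimensional Halton sequence by x_k := (φ_{p_1}(k), …, φ_{p_d}(k)) ∈ [0,1]^d for k ≥ 1. Then the empirical probability measures ℙ_n := n^{-1} Σ_{k=1}^n δ_{x_k} converge weakly, as n → ∞, to the uniform distribution 𝒰^d on [0,1]^d. -/

import Mathlib

open MeasureTheory Filter Topology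
open scoped ENNReal

noncomputable section

/-- `Euc d` is the Euclidean space `ℝ^d`. -/
abbrev Euc (d : ℕ) : Type := EuclideanSpace ℝ (Fin d)

/-- The unit cube `[0,1]^d`. -/
def unitCube (d : ℕ) : Set (Euc d) := {x | ∀ i, x i ∈ Set.Icc (0 : ℝ) 1}

/-- The uniform distribution `𝒰^d` on `[0,1]^d`. -/
def unifCube (d : ℕ) : Measure (Euc d) := volume.restrict (unitCube d)

/-- Weak convergence of measures along a filter. -/
def WeakTendsto {ι : Type*} (L : Filter ι) {α : Type*} [MeasurableSpace α]
    [TopologicalSpace α] (μs : ι → Measure α) (μ : Measure α) : Prop :=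
  ∀ f : BoundedContinuousFunction α ℝ,
    Tendsto (fun i => ∫ x, f x ∂ μs i) L (𝓝 (∫ x, f x ∂ μ))

/-- The radical inverse of `k` in base `p`: `φ_p(k) = ∑_i a_i p^{−(i+1)}` where the `a_i` are
the base-`p` digits of `k`. -/
def radInv (p k : ℕ) : ℝ :=
  ∑' i : ℕ, ((Nat.digits p k).getD i 0 : ℝ) / (p : ℝ) ^ (i + 1)

/-- The `k`-th element of the `d`-dimensional Halton sequence, whose `j`-th coordinate is the
radical inverse of `k` in base the `(j+1)`-st prime. -/
def halton (d : ℕ) (k : ℕ) : Euc d :=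
  WithLp.toLp 2 (fun j : Fin d => radInv (Nat.nth Nat.Prime (j : ℕ)) k)

/-!
Fix `e` and let `q_j = p_j ^ e`. The radical inverse satisfies
`φ_p(k) = (r + φ_p(k / p^e)) / p^e`, where `r = digitRev p e k` reverses the `e` lowest base-`p`
digits of `k`, so the Halton point `x_k` lies in the grid box of side lengths `1 / q_j` with
corner `(r_j / q_j)_j`. Since `r_j` determines `k` modulo `q_j`, the Chinese remainder theorem
shows that the `k` with `x_k` in a given box form a single residue class modulo `∏ q_j`, so the
proportion of the first `n` points in the box tends to its volume. As `e` grows these grids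
become arbitrarily fine, and comparing a bounded continuous `f` with its values at the box
corners (it is uniformly continuous on the cube) gives `∫ f dℙ_n → ∫ f d𝒰^d`.
-/

open Finset
open scoped BoundedContinuousFunction Function

lemma Nat.add_mul_eq_add_mul_iff {n r r' a a' : ℕ} (hr : r < n) (hr' : r' < n) :
    r + n * a = r' + n * a' ↔ r = r' ∧ a = a' := by
  refine ⟨fun h => ?_, by rintro ⟨rfl, rfl⟩; rfl⟩
  have hn : 0 < n := by omega
  have hmod := congrArg (· % n) h
  have hdiv := congrArg (· / n) h
  simp only [Nat.add_mul_mod_self_left, Nat.mod_eq_of_lt hr, Nat.mod_eq_of_lt hr'] at hmod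
  simp only [Nat.add_mul_div_left _ _ hn, Nat.div_eq_of_lt hr, Nat.div_eq_of_lt hr'] at hdiv
  exact ⟨hmod, by simpa using hdiv⟩

lemma Nat.modEq_pow_succ_iff {p k k' : ℕ} (e : ℕ) (hp : 0 < p) :
    k ≡ k' [MOD p ^ (e + 1)] ↔ k % p = k' % p ∧ k / p ≡ k' / p [MOD p ^ e] := by
  rw [Nat.ModEq, Nat.ModEq, pow_succ', Nat.mod_mul, Nat.mod_mul,
    Nat.add_mul_eq_add_mul_iff (Nat.mod_lt _ hp) (Nat.mod_lt _ hp)]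

def digitRev (p : ℕ) : ℕ → ℕ → ℕ
  | 0, _ => 0
  | e + 1, k => k % p * p ^ e + digitRev p e (k / p)

section DigitRev

variable {p : ℕ}

lemma digitRev_lt (hp : 0 < p) (e k : ℕ) : digitRev p e k < p ^ e := by
  induction e generalizing k with
  | zero => simp [digitRev]
  | succ e ih =>
    calc k % p * p ^ e + digitRev p e (k / p) < (k % p + 1) * p ^ e := by linarith [ih (k / p)]
      _ ≤ p ^ (e + 1) := by rw [pow_succ']; gcongr; exact Nat.mod_lt k hp

lemma digitRev_eq_digitRev_iff (hp : 0 < p) (e : ℕ) {k k' : ℕ} :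
    digitRev p e k = digitRev p e k' ↔ k ≡ k' [MOD p ^ e] := by
  induction e generalizing k k' with
  | zero => simp [digitRev, Nat.modEq_one]
  | succ e ih =>
    rw [Nat.modEq_pow_succ_iff e hp, ← ih, digitRev, digitRev, add_comm, add_comm (k' % p * _),
      mul_comm, mul_comm (k' % p),
      Nat.add_mul_eq_add_mul_iff (digitRev_lt hp e _) (digitRev_lt hp e _), and_comm]

lemma exists_digitRev_eq (hp : 0 < p) (e : ℕ) {m : ℕ} (hm : m < p ^ e) :
    ∃ k, digitRev p e k = m := by
  obtain ⟨k, -, hk⟩ := Finset.surj_on_of_inj_on_of_card_le (s := range (p ^ e))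
    (t := range (p ^ e)) (fun k _ => digitRev p e k)
    (fun k _ => mem_range.2 (digitRev_lt hp e k))
    (fun k k' hk hk' h => by
      simpa [Nat.ModEq, Nat.mod_eq_of_lt (mem_range.1 hk), Nat.mod_eq_of_lt (mem_range.1 hk')]
        using (digitRev_eq_digitRev_iff hp e).1 h)
    le_rfl m (mem_range.2 hm)
  exact ⟨k, hk.symm⟩

end DigitRev

section RadInv

variable {p : ℕ}

@[simp]
lemma radInv_zero (p : ℕ) : radInv p 0 = 0 := by simp [radInv]

lemma radInv_eq_mod_add_radInv_div (hp : 2 ≤ p) (k : ℕ) :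
    radInv p k = ((k % p : ℕ) + radInv p (k / p)) / p := by
  rcases Nat.eq_zero_or_pos k with rfl | hk
  · simp
  have hsum : Summable fun i => ((Nat.digits p k).getD i 0 : ℝ) / (p : ℝ) ^ (i + 1) :=
    summable_of_ne_finset_zero (s := range (Nat.digits p k).length) fun i hi => by
      rw [List.getD_eq_default _ _ (by simpa using hi)]; simp
  rw [radInv, hsum.tsum_eq_zero_add, Nat.digits_def' hp hk, radInv, add_div, ← tsum_div_const]
  simp only [List.getD_cons_zero, List.getD_cons_succ, pow_succ, div_div, zero_add, pow_zero,
    one_mul]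

lemma radInv_nonneg (p k : ℕ) : 0 ≤ radInv p k :=
  tsum_nonneg fun _ => by positivity

lemma radInv_lt_one (hp : 2 ≤ p) (k : ℕ) : radInv p k < 1 := by
  induction k using Nat.strong_induction_on with
  | _ k ih =>
    rcases Nat.eq_zero_or_pos k with rfl | hk
    · simp
    have hlt : radInv p (k / p) < 1 := ih _ (Nat.div_lt_self hk (by omega))
    have hdigit : ((k % p : ℕ) : ℝ) + 1 ≤ p := by exact_mod_cast Nat.mod_lt k (by omega)
    rw [radInv_eq_mod_add_radInv_div hp, div_lt_one (by positivity)]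
    linarith

lemma radInv_eq_digitRev_add (hp : 2 ≤ p) (e k : ℕ) :
    radInv p k = (digitRev p e k + radInv p (k / p ^ e)) / (p : ℝ) ^ e := by
  induction e generalizing k with
  | zero => simp [digitRev]
  | succ e ih =>
    rw [radInv_eq_mod_add_radInv_div hp, ih, digitRev, pow_succ', ← Nat.div_div_eq_div_mul]
    have : (p : ℝ) ≠ 0 := by positivity
    push_cast
    field_simp
    ring

lemma radInv_mem_Ico (hp : 2 ≤ p) (e k : ℕ) :
    radInv p k ∈
      Set.Ico ((digitRev p e k : ℝ) / (p : ℝ) ^ e) ((digitRev p e k + 1) / (p : ℝ) ^ e) := by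
  rw [radInv_eq_digitRev_add hp e k]
  have hpe : (0 : ℝ) < (p : ℝ) ^ e := by positivity
  constructor
  · gcongr
    exact le_add_of_nonneg_right (radInv_nonneg p _)
  · gcongr
    exact radInv_lt_one hp _

end RadInv

lemma Nat.modEq_prod_iff {ι : Type*} [Fintype ι] {q : ι → ℕ} (hq : Pairwise (Nat.Coprime on q))
    {a b : ℕ} : a ≡ b [MOD ∏ i, q i] ↔ ∀ i, a ≡ b [MOD q i] := by
  refine ⟨fun h i => h.of_dvd (Finset.dvd_prod_of_mem q (Finset.mem_univ i)), fun h => ?_⟩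
  rw [Nat.modEq_iff_dvd, Nat.cast_prod]
  exact Fintype.prod_dvd_of_coprime (fun i j hij => Nat.isCoprime_iff_coprime.2 (hq hij))
    fun i => Nat.modEq_iff_dvd.1 (h i)

lemma abs_card_filter_modEq_sub_le {P : ℕ} (hP : 0 < P) (c n : ℕ) :
    |(#{k ∈ Icc 1 n | k ≡ c [MOD P]} : ℝ) - n / P| ≤ 1 := by
  have hcard := Nat.Ioc_filter_modEq_card 0 n hP c
  rw [← Finset.Icc_add_one_left_eq_Ioc, zero_add] at hcard
  have hP' : (P : ℚ) ≠ 0 := by exact_mod_cast hP.ne'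
  set a : ℚ := ((n : ℚ) - c) / P
  set b : ℚ := (((0 : ℕ) : ℚ) - c) / P
  have hab : a - b = n / P := by simp only [a, b]; field_simp; ring
  have hnP : (0 : ℚ) ≤ n / P := by positivity
  have ha₁ := Int.floor_le a
  have ha₂ := Int.lt_floor_add_one a
  have hb₁ := Int.floor_le b
  have hb₂ := Int.lt_floor_add_one b
  have hF : (0 : ℤ) ≤ ⌊a⌋ - ⌊b⌋ := by
    have : (-1 : ℚ) < ⌊a⌋ - ⌊b⌋ := by linarith
    have : (-1 : ℤ) < ⌊a⌋ - ⌊b⌋ := by exact_mod_cast this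
    omega
  rw [max_eq_left hF] at hcard
  have hQ : |(#{k ∈ Icc 1 n | k ≡ c [MOD P]} : ℚ) - n / P| ≤ 1 := by
    rw [show (#{k ∈ Icc 1 n | k ≡ c [MOD P]} : ℚ) = ⌊a⌋ - ⌊b⌋ by exact_mod_cast hcard, abs_le]
    constructor <;> linarith
  have hR := (Rat.cast_le (K := ℝ)).2 hQ
  push_cast at hR
  exact hR

lemma tendsto_card_filter_modEq_div {P : ℕ} (hP : 0 < P) (c : ℕ) :
    Tendsto (fun n : ℕ => (#{k ∈ Icc 1 n | k ≡ c [MOD P]} : ℝ) / n) atTop (𝓝 (P : ℝ)⁻¹) := by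
  refine tendsto_iff_norm_sub_tendsto_zero.2 <| squeeze_zero' (.of_forall fun _ => norm_nonneg _)
    ?_ tendsto_one_div_atTop_nhds_zero_nat
  filter_upwards [eventually_gt_atTop 0] with n hn
  have hn' : (0 : ℝ) < n := by exact_mod_cast hn
  have hP' : (P : ℝ) ≠ 0 := by exact_mod_cast hP.ne'
  have : (#{k ∈ Icc 1 n | k ≡ c [MOD P]} : ℝ) / n - (P : ℝ)⁻¹ =
      ((#{k ∈ Icc 1 n | k ≡ c [MOD P]} : ℝ) - n / P) / n := by
    field_simp
  rw [Real.norm_eq_abs, this, abs_div, abs_of_pos hn']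
  gcongr
  exact abs_card_filter_modEq_sub_le hP c n

lemma mem_Ico_div_iff {n a : ℕ} (hn : 0 < n) {t : ℝ} :
    t ∈ Set.Ico ((a : ℝ) / n) ((a + 1) / n) ↔ 0 ≤ t ∧ ⌊t * n⌋₊ = a := by
  have hn' : (0 : ℝ) < n := by exact_mod_cast hn
  rw [Set.mem_Ico, div_le_iff₀ hn', lt_div_iff₀ hn']
  constructor
  · rintro ⟨h₁, h₂⟩
    have ht : 0 ≤ t := nonneg_of_mul_nonneg_left (le_trans (Nat.cast_nonneg a) h₁) hn'
    exact ⟨ht, (Nat.floor_eq_iff (by positivity)).2 ⟨h₁, h₂⟩⟩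
  · rintro ⟨ht, h⟩
    exact (Nat.floor_eq_iff (by positivity)).1 h

lemma unitCube_eq_preimage (d : ℕ) :
    unitCube d = WithLp.ofLp ⁻¹' Set.Icc 0 1 := by
  ext x
  simp [unitCube, Pi.le_def, forall_and]

lemma abs_setIntegral_sub_mul_le {X : Type*} [MeasurableSpace X] {μ : Measure X} {s : Set X}
    (hs : μ s < ∞) {f : X → ℝ} (hf : IntegrableOn f s μ) {c ε : ℝ}
    (h : ∀ x ∈ s, |f x - c| ≤ ε) :
    |(∫ x in s, f x ∂μ) - μ.real s * c| ≤ ε * μ.real s := by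
  rw [← smul_eq_mul, ← setIntegral_const, ← integral_sub hf (integrableOn_const hs.ne)]
  exact norm_setIntegral_le_of_norm_le_const hs fun x hx => (Real.norm_eq_abs _).trans_le (h x hx)

lemma integral_smul_sum_dirac {α ι : Type*} [MeasurableSpace α] [TopologicalSpace α]
    [OpensMeasurableSpace α] (f : α →ᵇ ℝ) (c : ℝ≥0∞) (s : Finset ι) (x : ι → α) :
    ∫ y, f y ∂(c • ∑ k ∈ s, Measure.dirac (x k)) = c.toReal * ∑ k ∈ s, f (x k) := by
  rw [integral_smul_measure, integral_finsetSum_measure fun k _ => f.integrable _, smul_eq_mul]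
  simp_rw [integral_dirac' _ _ f.continuous.stronglyMeasurable]

lemma EuclideanSpace.dist_le_sqrt_card_mul {d : ℕ} {x y : Euc d} {η : ℝ} (hη : 0 ≤ η)
    (h : ∀ j, |x j - y j| ≤ η) : dist x y ≤ √d * η := by
  rw [EuclideanSpace.dist_eq, ← Real.sqrt_sq hη, ← Real.sqrt_mul (Nat.cast_nonneg d)]
  gcongr
  calc ∑ j, dist (x j) (y j) ^ 2 ≤ ∑ _j : Fin d, η ^ 2 :=
        Finset.sum_le_sum fun j _ => pow_le_pow_left₀ dist_nonneg (h j) 2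
    _ = d * η ^ 2 := by simp

lemma isCompact_unitCube (d : ℕ) : IsCompact (unitCube d) := by
  rw [unitCube_eq_preimage]
  exact (PiLp.continuousLinearEquiv 2 ℝ _).toHomeomorph.isCompact_preimage.2 isCompact_Icc

section GridBox

variable {d : ℕ} (q : Fin d → ℕ)

def gridBox (m : ∀ j, Fin (q j)) : Set (Euc d) :=
  {x | ∀ j, x j ∈ Set.Ico ((m j : ℝ) / q j) ((m j + 1 : ℝ) / q j)}

def gridCorner (m : ∀ j, Fin (q j)) : Euc d :=
  WithLp.toLp 2 fun j => (m j : ℝ) / q j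

lemma gridBox_eq_preimage (m : ∀ j, Fin (q j)) :
    gridBox q m = WithLp.ofLp ⁻¹'
      Set.univ.pi fun j => Set.Ico ((m j : ℝ) / q j) ((m j + 1 : ℝ) / q j) := by
  ext x
  simp [gridBox]

lemma measurableSet_gridBox (m : ∀ j, Fin (q j)) : MeasurableSet (gridBox q m) := by
  rw [gridBox_eq_preimage]
  exact (PiLp.volume_preserving_ofLp _).measurable
    (MeasurableSet.univ_pi fun _ => measurableSet_Ico)

variable {q}

lemma volume_gridBox (hq : ∀ j, 0 < q j) (m : ∀ j, Fin (q j)) :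
    volume (gridBox q m) = ENNReal.ofReal (∏ j, (q j : ℝ)⁻¹) := by
  rw [gridBox_eq_preimage, (PiLp.volume_preserving_ofLp _).measure_preimage
    (MeasurableSet.univ_pi fun _ => measurableSet_Ico).nullMeasurableSet, volume_pi_pi,
    ENNReal.ofReal_prod_of_nonneg fun _ _ => by positivity]
  refine Finset.prod_congr rfl fun j _ => ?_
  have : (q j : ℝ) ≠ 0 := by exact_mod_cast (hq j).ne'
  rw [Real.volume_Ico]
  congr 1
  field_simp
  ring

lemma measureReal_gridBox (hq : ∀ j, 0 < q j) (m : ∀ j, Fin (q j)) :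
    volume.real (gridBox q m) = ∏ j, (q j : ℝ)⁻¹ := by
  rw [measureReal_def, volume_gridBox hq, ENNReal.toReal_ofReal (by positivity)]

lemma eq_of_mem_gridBox (hq : ∀ j, 0 < q j) {m m' : ∀ j, Fin (q j)} {x : Euc d}
    (h : x ∈ gridBox q m) (h' : x ∈ gridBox q m') : m = m' :=
  funext fun j => Fin.ext <|
    ((mem_Ico_div_iff (hq j)).1 (h j)).2.symm.trans ((mem_Ico_div_iff (hq j)).1 (h' j)).2

lemma mem_Ico_of_mem_gridBox {m : ∀ j, Fin (q j)} {x : Euc d} (h : x ∈ gridBox q m) (j : Fin d) :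
    x j ∈ Set.Ico 0 1 := by
  have hq : 0 < q j := Fin.pos (m j)
  obtain ⟨ht, hfloor⟩ := (mem_Ico_div_iff hq).1 (h j)
  refine ⟨ht, ?_⟩
  have := (m j).2
  rw [← hfloor, Nat.floor_lt (by positivity)] at this
  have hq' : (0 : ℝ) < q j := by exact_mod_cast hq
  nlinarith

lemma exists_mem_gridBox (hq : ∀ j, 0 < q j) {x : Euc d} (hx : ∀ j, x j ∈ Set.Ico 0 1) :
    ∃ m, x ∈ gridBox q m := by
  have hlt : ∀ j, ⌊x j * q j⌋₊ < q j := fun j => by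
    have hq' : (0 : ℝ) < q j := by exact_mod_cast hq j
    rw [Nat.floor_lt (mul_nonneg (hx j).1 hq'.le)]
    nlinarith [(hx j).2]
  exact ⟨fun j => ⟨_, hlt j⟩, fun j => (mem_Ico_div_iff (hq j)).2 ⟨(hx j).1, rfl⟩⟩

lemma gridBox_subset_unitCube (m : ∀ j, Fin (q j)) : gridBox q m ⊆ unitCube d :=
  fun _ hx j => Set.Ico_subset_Icc_self (mem_Ico_of_mem_gridBox hx j)

lemma unitCube_ae_eq_iUnion_gridBox (hq : ∀ j, 0 < q j) :
    unitCube d =ᵐ[volume] ⋃ m, gridBox q m := by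
  have hunion : ⋃ m, gridBox q m = WithLp.ofLp ⁻¹' Set.univ.pi fun _ => Set.Ico (0 : ℝ) 1 := by
    ext x
    simp only [Set.mem_iUnion, Set.mem_preimage, Set.mem_univ_pi]
    exact ⟨fun ⟨m, hm⟩ => mem_Ico_of_mem_gridBox hm, exists_mem_gridBox hq⟩
  rw [hunion, unitCube_eq_preimage]
  exact (PiLp.volume_preserving_ofLp _).quasiMeasurePreserving.preimage_ae_eq
    (Measure.univ_pi_Ico_ae_eq_Icc (μ := fun _ => volume)).symm

instance (m : ∀ j, Fin (q j)) : DecidablePred (· ∈ gridBox q m) := Classical.decPred _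

lemma integral_unifCube_eq_sum_setIntegral_gridBox (hq : ∀ j, 0 < q j) (f : Euc d →ᵇ ℝ) :
    ∫ x, f x ∂unifCube d = ∑ m, ∫ x in gridBox q m, f x := by
  rw [unifCube, setIntegral_congr_set (unitCube_ae_eq_iUnion_gridBox hq)]
  refine integral_iUnion_fintype (measurableSet_gridBox q) (fun m m' hm => ?_) fun m => ?_
  · exact Set.disjoint_left.2 fun x hx hx' => hm (eq_of_mem_gridBox hq hx hx')
  · have : IsFiniteMeasure (volume.restrict (gridBox q m)) :=
      isFiniteMeasure_restrict.2 (by simp [volume_gridBox hq])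
    exact f.integrable _

lemma abs_integral_unifCube_sub_sum_le (hq : ∀ j, 0 < q j) (f : Euc d →ᵇ ℝ) {ε : ℝ}
    (hf : ∀ m, ∀ x ∈ gridBox q m, |f x - f (gridCorner q m)| ≤ ε) :
    |(∫ x, f x ∂unifCube d) - ∑ m, (∏ j, (q j : ℝ)⁻¹) * f (gridCorner q m)| ≤ ε := by
  have hvol : ∀ m, volume (gridBox q m) < ∞ := fun m => by simp [volume_gridBox hq]
  have hcard : (Fintype.card (∀ j, Fin (q j)) : ℝ) * ∏ j, (q j : ℝ)⁻¹ = 1 := by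
    simp only [Fintype.card_pi, Fintype.card_fin, Nat.cast_prod, ← Finset.prod_mul_distrib]
    exact Finset.prod_eq_one fun j _ => mul_inv_cancel₀ (by exact_mod_cast (hq j).ne')
  rw [integral_unifCube_eq_sum_setIntegral_gridBox hq, ← Finset.sum_sub_distrib]
  calc _ ≤ ∑ m, |(∫ x in gridBox q m, f x) - (∏ j, (q j : ℝ)⁻¹) * f (gridCorner q m)| :=
        Finset.abs_sum_le_sum_abs _ _
    _ ≤ ∑ _m : ∀ j, Fin (q j), ε * ∏ j, (q j : ℝ)⁻¹ := by
        gcongr with m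
        have : IsFiniteMeasure (volume.restrict (gridBox q m)) :=
          isFiniteMeasure_restrict.2 (hvol m).ne
        simpa only [measureReal_gridBox hq] using
          abs_setIntegral_sub_mul_le (hvol m) (f.integrable _) (hf m)
    _ = ε := by rw [Finset.sum_const, Finset.card_univ, nsmul_eq_mul, mul_left_comm, hcard, mul_one]

lemma sum_sum_filter_mem_gridBox (hq : ∀ j, 0 < q j) {ι M : Type*} [AddCommMonoid M]
    (s : Finset ι) (x : ι → Euc d) (hx : ∀ k ∈ s, ∀ j, x k j ∈ Set.Ico 0 1) (g : ι → M) :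
    ∑ m, ∑ k ∈ s with x k ∈ gridBox q m, g k = ∑ k ∈ s, g k := by
  have : Nonempty (∀ j, Fin (q j)) := ⟨fun j => ⟨0, hq j⟩⟩
  choose! idx hidx using fun k hk => exists_mem_gridBox hq (hx k hk)
  rw [← Finset.sum_fiberwise_of_maps_to (g := idx) (t := univ) fun _ _ => mem_univ _]
  refine Finset.sum_congr rfl fun m _ =>
    Finset.sum_congr (Finset.filter_congr fun k hk => ?_) fun _ _ => rfl
  exact ⟨fun h => eq_of_mem_gridBox hq (hidx k hk) h, fun h => h ▸ hidx k hk⟩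

lemma abs_sum_sub_sum_card_mul_le (hq : ∀ j, 0 < q j) {ι : Type*} (s : Finset ι) (x : ι → Euc d)
    (hx : ∀ k ∈ s, ∀ j, x k j ∈ Set.Ico 0 1) (f : Euc d → ℝ) {ε : ℝ}
    (hf : ∀ m, ∀ y ∈ gridBox q m, |f y - f (gridCorner q m)| ≤ ε) :
    |∑ k ∈ s, f (x k) - ∑ m, (#{k ∈ s | x k ∈ gridBox q m} : ℝ) * f (gridCorner q m)| ≤
      ε * #s := by
  rw [← sum_sum_filter_mem_gridBox hq s x hx, Finset.card_eq_sum_ones, Nat.cast_sum,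
    ← sum_sum_filter_mem_gridBox hq s x hx, Finset.mul_sum,
    ← Finset.sum_sub_distrib]
  refine (Finset.abs_sum_le_sum_abs _ _).trans (Finset.sum_le_sum fun m _ => ?_)
  rw [Finset.card_eq_sum_ones, Nat.cast_sum, Finset.sum_mul, ← Finset.sum_sub_distrib,
    Finset.mul_sum]
  refine (Finset.abs_sum_le_sum_abs _ _).trans (Finset.sum_le_sum fun k hk => ?_)
  simpa using hf m _ (Finset.mem_filter.1 hk).2

lemma dist_le_of_mem_gridBox {η : ℝ} (hη₀ : 0 ≤ η) (hη : ∀ j, (q j : ℝ)⁻¹ ≤ η)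
    {m : ∀ j, Fin (q j)} {x y : Euc d} (hx : x ∈ gridBox q m) (hy : y ∈ gridBox q m) :
    dist x y ≤ √d * η := by
  refine EuclideanSpace.dist_le_sqrt_card_mul hη₀ fun j => ?_
  have hx := hx j
  have hy := hy j
  simp only [Set.mem_Ico, add_div, one_div] at hx hy
  rw [abs_sub_le_iff]
  constructor <;> linarith [hη j]

lemma gridCorner_mem_gridBox (hq : ∀ j, 0 < q j) (m : ∀ j, Fin (q j)) :
    gridCorner q m ∈ gridBox q m := fun j => by
  have : (0 : ℝ) < q j := by exact_mod_cast hq j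
  exact ⟨le_rfl, by simp only [gridCorner]; gcongr; linarith⟩

lemma exists_forall_gridBox_abs_sub_le {f : Euc d → ℝ} (hf : Continuous f) {ε : ℝ}
    (hε : 0 < ε) : ∃ δ > 0, ∀ q : Fin d → ℕ, (∀ j, 0 < q j) → (∀ j, (q j : ℝ)⁻¹ < δ) →
      ∀ m, ∀ x ∈ gridBox q m, |f x - f (gridCorner q m)| ≤ ε := by
  obtain ⟨δ, hδ, hfδ⟩ := Metric.uniformContinuousOn_iff.1
    ((isCompact_unitCube d).uniformContinuousOn_of_continuous hf.continuousOn) ε hε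
  refine ⟨δ / (√d + 1), by positivity, fun q hq hqδ m x hx =>
    (hfδ _ (gridBox_subset_unitCube m hx) _
      (gridBox_subset_unitCube m (gridCorner_mem_gridBox hq m)) ?_).le⟩
  calc dist x (gridCorner q m) ≤ √d * (δ / (√d + 1)) :=
        dist_le_of_mem_gridBox (by positivity) (fun j => (hqδ j).le) hx
          (gridCorner_mem_gridBox hq m)
    _ < δ := by
        rw [mul_div_assoc', div_lt_iff₀ (by positivity)]
        nlinarith [Real.sqrt_nonneg d]

end GridBox

theorem weakTendsto_unifCube_of_tendsto_card_gridBox {d : ℕ} (x : ℕ → Euc d)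
    (hx : ∀ k j, x k j ∈ Set.Ico 0 1)
    (h : ∀ δ > 0, ∃ q : Fin d → ℕ, (∀ j, 0 < q j) ∧ (∀ j, (q j : ℝ)⁻¹ < δ) ∧
      ∀ m, Tendsto (fun n : ℕ => (#{k ∈ Icc 1 n | x k ∈ gridBox q m} : ℝ) / n) atTop
        (𝓝 (∏ j, (q j : ℝ)⁻¹))) :
    WeakTendsto atTop (fun n : ℕ => (n : ℝ≥0∞)⁻¹ • ∑ k ∈ Icc 1 n, Measure.dirac (x k))
      (unifCube d) := by
  intro f
  simp only [integral_smul_sum_dirac, ENNReal.toReal_inv, ENNReal.toReal_natCast]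
  refine Metric.tendsto_atTop.2 fun ε hε => ?_
  obtain ⟨δ, hδ, hosc⟩ := exists_forall_gridBox_abs_sub_le f.continuous (by positivity : 0 < ε / 4)
  obtain ⟨q, hq, hqδ, hfreq⟩ := h δ hδ
  have hf := hosc q hq hqδ
  -- three `ε / 4` steps: the empirical mean is close to the box-frequency sum `B n`, which tends
  -- to the Riemann sum `S`, which is close to `∫ f d𝒰^d`
  set S := ∑ m, (∏ j, (q j : ℝ)⁻¹) * f (gridCorner q m)
  have hS : |(∫ y, f y ∂unifCube d) - S| ≤ ε / 4 := abs_integral_unifCube_sub_sum_le hq f hf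
  set B : ℕ → ℝ := fun n => (n : ℝ)⁻¹ *
    ∑ m, (#{k ∈ Icc 1 n | x k ∈ gridBox q m} : ℝ) * f (gridCorner q m)
  have hB : Tendsto B atTop (𝓝 S) := by
    simp only [B, Finset.mul_sum, ← mul_assoc, inv_mul_eq_div]
    exact tendsto_finsetSum _ fun m _ => (hfreq m).mul_const _
  obtain ⟨N, hN⟩ := Metric.tendsto_atTop.1 hB (ε / 4) (by positivity)
  refine ⟨max N 1, fun n hn => ?_⟩
  have hn₀ : (0 : ℝ) < n := by exact_mod_cast (le_of_max_le_right hn)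
  have hA := abs_sum_sub_sum_card_mul_le hq (Icc 1 n) x (fun k _ => hx k) f hf
  rw [Nat.card_Icc, add_tsub_cancel_right] at hA
  have hAB : |(n : ℝ)⁻¹ * ∑ k ∈ Icc 1 n, f (x k) - B n| ≤ ε / 4 := by
    rw [← mul_sub, abs_mul, abs_inv, abs_of_pos hn₀, inv_mul_le_iff₀ hn₀]
    linarith
  have hBS := hN n (le_of_max_le_left hn)
  rw [Real.dist_eq] at hBS ⊢
  have := abs_sub_le ((n : ℝ)⁻¹ * ∑ k ∈ Icc 1 n, f (x k)) (B n) (∫ y, f y ∂unifCube d)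
  have := abs_sub_le (B n) S (∫ y, f y ∂unifCube d)
  rw [abs_sub_comm S] at this
  linarith

def haltonGrid (d e : ℕ) (j : Fin d) : ℕ := Nat.nth Nat.Prime j ^ e

section Halton

variable {d : ℕ}

lemma two_le_nth_prime (j : ℕ) : 2 ≤ Nat.nth Nat.Prime j := (Nat.prime_nth_prime j).two_le

lemma haltonGrid_pos (e : ℕ) (j : Fin d) : 0 < haltonGrid d e j :=
  pow_pos (Nat.prime_nth_prime j).pos e

lemma coprime_haltonGrid (e : ℕ) : Pairwise (Nat.Coprime on haltonGrid d e) := fun _ _ hij =>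
  Nat.Coprime.pow _ _ <| (Nat.coprime_primes (Nat.prime_nth_prime _) (Nat.prime_nth_prime _)).2
    fun h => hij (Fin.ext (Nat.nth_injective Nat.infinite_setOfPred_prime h))

lemma halton_mem_Ico (k : ℕ) (j : Fin d) : halton d k j ∈ Set.Ico 0 1 :=
  ⟨radInv_nonneg _ k, radInv_lt_one (two_le_nth_prime j) k⟩

lemma halton_mem_gridBox_iff {e k : ℕ} {m : ∀ j, Fin (haltonGrid d e j)} :
    halton d k ∈ gridBox (haltonGrid d e) m ↔
      ∀ j : Fin d, digitRev (Nat.nth Nat.Prime j) e k = m j := by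
  refine forall_congr' fun j => ?_
  have hq := haltonGrid_pos (d := d) e j
  obtain ⟨-, hfloor⟩ := (mem_Ico_div_iff hq).1 <| by
    simpa only [haltonGrid, Nat.cast_pow] using radInv_mem_Ico (two_le_nth_prime j) e k
  rw [mem_Ico_div_iff hq]
  exact ⟨fun h => hfloor ▸ h.2, fun h => ⟨radInv_nonneg _ _, hfloor.trans h⟩⟩

lemma exists_forall_halton_mem_gridBox_iff_modEq (e : ℕ) (m : ∀ j, Fin (haltonGrid d e j)) :
    ∃ c, ∀ k, halton d k ∈ gridBox (haltonGrid d e) m ↔ k ≡ c [MOD ∏ j, haltonGrid d e j] := by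
  choose b hb using fun j : Fin d => exists_digitRev_eq (Nat.prime_nth_prime j).pos e (m j).2
  obtain ⟨c, hc⟩ := Nat.chineseRemainderOfFinset b (haltonGrid d e) Finset.univ
    (fun j _ => (haltonGrid_pos e j).ne') ((coprime_haltonGrid e).set_pairwise _)
  refine ⟨c, fun k => ?_⟩
  rw [halton_mem_gridBox_iff, Nat.modEq_prod_iff (coprime_haltonGrid e)]
  refine forall_congr' fun j => ?_
  rw [← hb j, digitRev_eq_digitRev_iff (Nat.prime_nth_prime j).pos]
  have hcj := hc j (mem_univ j)
  exact ⟨fun h => h.trans hcj.symm, fun h => h.trans hcj⟩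

lemma tendsto_card_halton_mem_gridBox (e : ℕ) (m : ∀ j, Fin (haltonGrid d e j)) :
    Tendsto (fun n : ℕ => (#{k ∈ Icc 1 n | halton d k ∈ gridBox (haltonGrid d e) m} : ℝ) / n)
      atTop (𝓝 (∏ j, (haltonGrid d e j : ℝ)⁻¹)) := by
  obtain ⟨c, hc⟩ := exists_forall_halton_mem_gridBox_iff_modEq e m
  simp_rw [hc, Finset.prod_inv_distrib, ← Nat.cast_prod]
  exact tendsto_card_filter_modEq_div (Finset.prod_pos fun j _ => haltonGrid_pos e j) c

end Halton

/-- The empirical measures of the `d`-dimensional Halton sequence converge weakly to the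
uniform distribution on `[0,1]^d`. -/
theorem stmt19 (d : ℕ) :
    WeakTendsto atTop
      (fun n : ℕ => (n : ℝ≥0∞)⁻¹ • ∑ k ∈ Finset.Icc 1 n, Measure.dirac (halton d k))
      (unifCube d) := by
  refine weakTendsto_unifCube_of_tendsto_card_gridBox _ halton_mem_Ico fun δ hδ => ?_
  obtain ⟨e, he⟩ := exists_pow_lt_of_lt_one hδ (by norm_num : (2 : ℝ)⁻¹ < 1)
  refine ⟨haltonGrid d e, haltonGrid_pos e, fun j => ?_, tendsto_card_halton_mem_gridBox e⟩
  refine lt_of_le_of_lt ?_ he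
  rw [haltonGrid, Nat.cast_pow, ← inv_pow]
  gcongr
  exact_mod_cast two_le_nth_prime j

end
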